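/- arXiv:1206.3889 — 2 statements merged into one kernel-verified Lean document; each statement's English description precedes it below -/
import Mathlib

section
/- Let H be a complex Hilbert space and (a_i)_{i∈ℕ} a sequence of bounded operators on H forming a bounded column operator. The set {a_i} fails to be strongly independent (i.e., there exists a nonzero (λ_i) ∈ ℓ² with ∑_i λ_i a_i = 0 in operator norm) if and only if the set J = {(ω(a_1), ω(a_2), …) : ω a weak*-continuous linear functional on B(H)} is not dense in ℓ². -/
/-!
For `λ ∈ ℓ²` the series `∑ λᵢ aᵢ` converges in norm (Cauchy–Schwarz against the bounded column),
and for every normal functional `ω` one has `⟪λ̄, (ω (aᵢ))ᵢ⟫ = ω (∑ λᵢ aᵢ)`. Since rank-one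
functionals `T ↦ ⟪y, T x⟫` separate operators, `λ̄ ⊥ J` exactly when `∑ λᵢ aᵢ = 0`. Interleaving
the vectors of two normal functionals shows that `J` is a subspace, so `J` is dense iff `Jᗮ = 0`.
-/

open scoped InnerProductSpace

theorem memℓp_two_iff {α : Type*} {E : α → Type*} [∀ i, NormedAddCommGroup (E i)]
    {f : ∀ i, E i} : Memℓp f 2 ↔ Summable fun i => ‖f i‖ ^ 2 := by
  rw [memℓp_gen_iff (by norm_num)]
  simp

section Interleave

variable {α : Type*}

/-- The sequence `x 0, y 0, x 1, y 1, …`. -/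
def interleave (x y : ℕ → α) : ℕ → α :=
  Sum.elim x y ∘ Equiv.natSumNatEquivNat.symm

theorem comp_interleave {β : Type*} (F : α → β) (x y : ℕ → α) :
    F ∘ interleave x y = interleave (F ∘ x) (F ∘ y) := by
  ext k
  simp only [interleave, Function.comp_apply]
  cases Equiv.natSumNatEquivNat.symm k <;> rfl

theorem interleave_apply₂ {β γ : Type*} (F : α → β → γ) (x y : ℕ → α) (x' y' : ℕ → β) :
    (fun k => F (interleave x y k) (interleave x' y' k)) =
      interleave (fun k => F (x k) (x' k)) (fun k => F (y k) (y' k)) := by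
  ext k
  simp only [interleave, Function.comp_apply]
  cases Equiv.natSumNatEquivNat.symm k <;> rfl

theorem HasSum.interleave [AddCommMonoid α] [TopologicalSpace α] [ContinuousAdd α]
    {x y : ℕ → α} {a b : α} (hx : HasSum x a) (hy : HasSum y b) :
    HasSum (interleave x y) (a + b) :=
  Equiv.natSumNatEquivNat.symm.hasSum_iff.mpr (HasSum.sum (f := Sum.elim x y) hx hy)

end Interleave

section Column

variable {ι 𝕜 E F : Type*} [NontriviallyNormedField 𝕜] [NormedAddCommGroup E] [NormedSpace 𝕜 E]
  [NormedAddCommGroup F] [NormedSpace 𝕜 F] {a : ι → E →L[𝕜] F} {C : ℝ}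

theorem norm_sum_smul_le_of_column (hsum : ∀ ξ : E, Summable fun i => ‖a i ξ‖ ^ 2)
    (hcol : ∀ ξ : E, ∑' i, ‖a i ξ‖ ^ 2 ≤ C ^ 2 * ‖ξ‖ ^ 2) (μ : ι → 𝕜) (t : Finset ι) :
    ‖∑ i ∈ t, μ i • a i‖ ≤ √(∑ i ∈ t, ‖μ i‖ ^ 2) * |C| := by
  refine ContinuousLinearMap.opNorm_le_bound _ (by positivity) fun ξ => ?_
  have hcol_t : √(∑ i ∈ t, ‖a i ξ‖ ^ 2) ≤ |C| * ‖ξ‖ := by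
    rw [← abs_norm ξ, ← abs_mul, ← Real.sqrt_sq_eq_abs, mul_pow]
    exact Real.sqrt_le_sqrt ((hsum ξ).sum_le_tsum t (fun i _ => by positivity) |>.trans (hcol ξ))
  calc ‖(∑ i ∈ t, μ i • a i) ξ‖ ≤ ∑ i ∈ t, ‖μ i‖ * ‖a i ξ‖ := by
        simpa [norm_smul] using norm_sum_le t fun i => μ i • a i ξ
    _ ≤ √(∑ i ∈ t, ‖μ i‖ ^ 2) * √(∑ i ∈ t, ‖a i ξ‖ ^ 2) := Real.sum_mul_le_sqrt_mul_sqrt _ _ _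
    _ ≤ √(∑ i ∈ t, ‖μ i‖ ^ 2) * (|C| * ‖ξ‖) := by gcongr
    _ = √(∑ i ∈ t, ‖μ i‖ ^ 2) * |C| * ‖ξ‖ := by ring

theorem summable_smul_of_column [CompleteSpace F]
    (hsum : ∀ ξ : E, Summable fun i => ‖a i ξ‖ ^ 2)
    (hcol : ∀ ξ : E, ∑' i, ‖a i ξ‖ ^ 2 ≤ C ^ 2 * ‖ξ‖ ^ 2) {μ : ι → 𝕜}
    (hμ : Summable fun i => ‖μ i‖ ^ 2) : Summable fun i => μ i • a i := by
  rw [summable_iff_vanishing_norm]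
  intro ε hε
  set δ := ε / (|C| + 1)
  obtain ⟨s, hs⟩ := summable_iff_vanishing_norm.1 hμ (δ ^ 2) (by positivity)
  refine ⟨s, fun t ht => ?_⟩
  have htail : √(∑ i ∈ t, ‖μ i‖ ^ 2) < δ := by
    have := hs t ht
    rw [Real.norm_of_nonneg (by positivity)] at this
    exact (Real.sqrt_lt' (by positivity)).2 this
  calc ‖∑ i ∈ t, μ i • a i‖ ≤ √(∑ i ∈ t, ‖μ i‖ ^ 2) * |C| :=
        norm_sum_smul_le_of_column hsum hcol μ t
    _ ≤ √(∑ i ∈ t, ‖μ i‖ ^ 2) * (|C| + 1) := by gcongr; linarith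
    _ < δ * (|C| + 1) := by gcongr
    _ = ε := div_mul_cancel₀ ε (by positivity)

end Column

section NormalFunctional

variable {κ 𝕜 E : Type*} [RCLike 𝕜] [NormedAddCommGroup E] [InnerProductSpace 𝕜 E]

/-- The normal functional `T ↦ ∑ₖ ⟪η k, T (ξ k)⟫`. It is `0` unless its terms are summable in
operator norm, as they are for square-summable `ξ` and `η`. -/
noncomputable def normalFunctional (ξ η : κ → E) : (E →L[𝕜] E) →L[𝕜] 𝕜 :=
  ∑' k, (innerSL 𝕜 (η k)).comp (ContinuousLinearMap.apply 𝕜 E (ξ k))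

theorem norm_innerSL_comp_apply_le (x y : E) :
    ‖(innerSL 𝕜 y).comp (ContinuousLinearMap.apply 𝕜 E x)‖ ≤ ‖y‖ * ‖x‖ :=
  ContinuousLinearMap.opNorm_le_bound _ (by positivity) fun T =>
    calc ‖⟪y, T x⟫_𝕜‖ ≤ ‖y‖ * ‖T x‖ := norm_inner_le_norm _ _
      _ ≤ ‖y‖ * (‖T‖ * ‖x‖) := by gcongr; exact T.le_opNorm x
      _ = ‖y‖ * ‖x‖ * ‖T‖ := by ring

theorem hasSum_normalFunctional {ξ η : κ → E} (hξ : Summable fun k => ‖ξ k‖ ^ 2)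
    (hη : Summable fun k => ‖η k‖ ^ 2) (T : E →L[𝕜] E) :
    HasSum (fun k => ⟪η k, T (ξ k)⟫_𝕜) (normalFunctional ξ η T) := by
  have hprod : Summable fun k => ‖η k‖ * ‖ξ k‖ :=
    ((hη.add hξ).div_const 2).of_nonneg_of_le (fun k => by positivity) fun k => by
      nlinarith [two_mul_le_add_sq ‖η k‖ ‖ξ k‖]
  have hterms := (hprod.of_norm_bounded (f := fun k => (innerSL 𝕜 (η k)).comp
    (ContinuousLinearMap.apply 𝕜 E (ξ k))) fun k => norm_innerSL_comp_apply_le (ξ k) (η k)).hasSum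
  exact hterms.mapL (ContinuousLinearMap.apply 𝕜 𝕜 T)

theorem summable_norm_sq_single [DecidableEq κ] (k₀ : κ) (x : E) :
    Summable fun k => ‖(Pi.single k₀ x : κ → E) k‖ ^ 2 :=
  (hasSum_single k₀ fun k hk => by simp [hk]).summable

theorem normalFunctional_single [DecidableEq κ] (k₀ : κ) (x y : E) (T : E →L[𝕜] E) :
    normalFunctional (Pi.single k₀ x) (Pi.single k₀ y) T = ⟪y, T x⟫_𝕜 := by
  refine (hasSum_normalFunctional (summable_norm_sq_single k₀ x)
    (summable_norm_sq_single k₀ y) T).unique ?_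
  simpa using hasSum_single k₀ (f := fun k =>
    ⟪(Pi.single k₀ y : κ → E) k, T ((Pi.single k₀ x : κ → E) k)⟫_𝕜) fun k hk => by simp [hk]

variable {ι : Type*} {a : ι → E →L[𝕜] E}

theorem inner_star_eq_normalFunctional {lam v : lp (fun _ : ι => 𝕜) 2} {T : E →L[𝕜] E}
    (hT : HasSum (fun i => lam i • a i) T) {ξ η : κ → E}
    (hv : ∀ i, v i = normalFunctional ξ η (a i)) :
    ⟪star lam, v⟫_𝕜 = normalFunctional ξ η T := by
  refine (lp.hasSum_inner (star lam) v).unique ?_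
  convert hT.mapL (normalFunctional ξ η) using 2 with i
  simp [lp.star_apply, hv, mul_comm]

theorem memℓp_inner_apply (hsum : ∀ x : E, Summable fun i => ‖a i x‖ ^ 2) (x y : E) :
    Memℓp (fun i => ⟪y, a i x⟫_𝕜) 2 := by
  refine memℓp_two_iff.2 <| ((hsum x).mul_left (‖y‖ ^ 2)).of_nonneg_of_le (fun i => by positivity)
    fun i => ?_
  rw [← mul_pow]
  gcongr
  exact norm_inner_le_norm _ _

end NormalFunctional

section Image

variable {ι 𝕜 E : Type*} [RCLike 𝕜] [NormedAddCommGroup E] [InnerProductSpace 𝕜 E]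
  {a : ι → E →L[𝕜] E}

/-- The space `J = {(ω (a i))ᵢ : ω normal}` of the statement, as a subspace of `ℓ²`. -/
def normalFunctionalImage (a : ι → E →L[𝕜] E) : Submodule 𝕜 (lp (fun _ : ι => 𝕜) 2) where
  carrier := {v | ∃ ξ η : ℕ → E, (Summable fun k => ‖ξ k‖ ^ 2) ∧
    (Summable fun k => ‖η k‖ ^ 2) ∧ ∀ i, v i = ∑' k, ⟪η k, a i (ξ k)⟫_𝕜}
  zero_mem' := ⟨0, 0, by simp, by simp, by simp⟩
  add_mem' := by
    rintro v w ⟨ξ, η, hξ, hη, hv⟩ ⟨ξ', η', hξ', hη', hw⟩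
    refine ⟨interleave ξ ξ', interleave η η', ?_, ?_, fun i => ?_⟩
    · change Summable ((‖·‖ ^ 2) ∘ interleave ξ ξ')
      exact comp_interleave _ ξ ξ' ▸ (hξ.hasSum.interleave hξ'.hasSum).summable
    · change Summable ((‖·‖ ^ 2) ∘ interleave η η')
      exact comp_interleave _ η η' ▸ (hη.hasSum.interleave hη'.hasSum).summable
    · rw [interleave_apply₂ (fun y x => ⟪y, a i x⟫_𝕜), lp.coeFn_add, Pi.add_apply, hv, hw,
        ((hasSum_normalFunctional hξ hη (a i)).interleave
          (hasSum_normalFunctional hξ' hη' (a i))).tsum_eq,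
        (hasSum_normalFunctional hξ hη (a i)).tsum_eq,
        (hasSum_normalFunctional hξ' hη' (a i)).tsum_eq]
  smul_mem' := by
    rintro c v ⟨ξ, η, hξ, hη, hv⟩
    refine ⟨fun k => c • ξ k, η, ?_, hη, fun i => ?_⟩
    · simpa [norm_smul, mul_pow] using hξ.mul_left (‖c‖ ^ 2)
    · simp [hv, inner_smul_right, tsum_mul_left]

theorem mem_normalFunctionalImage_iff {v : lp (fun _ : ι => 𝕜) 2} :
    v ∈ normalFunctionalImage a ↔ ∃ ξ η : ℕ → E, (Summable fun k => ‖ξ k‖ ^ 2) ∧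
      (Summable fun k => ‖η k‖ ^ 2) ∧ ∀ i, v i = normalFunctional ξ η (a i) := by
  refine exists₂_congr fun ξ η => ⟨?_, ?_⟩
  · rintro ⟨hξ, hη, hv⟩
    exact ⟨hξ, hη, fun i => (hv i).trans (hasSum_normalFunctional hξ hη (a i)).tsum_eq⟩
  · rintro ⟨hξ, hη, hv⟩
    exact ⟨hξ, hη, fun i => (hv i).trans (hasSum_normalFunctional hξ hη (a i)).tsum_eq.symm⟩

theorem mem_orthogonal_normalFunctionalImage_iff [CompleteSpace E] {C : ℝ}
    (hsum : ∀ x : E, Summable fun i => ‖a i x‖ ^ 2)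
    (hcol : ∀ x : E, ∑' i, ‖a i x‖ ^ 2 ≤ C ^ 2 * ‖x‖ ^ 2) (w : lp (fun _ : ι => 𝕜) 2) :
    w ∈ (normalFunctionalImage a)ᗮ ↔ HasSum (fun i => star w i • a i) 0 := by
  constructor
  · intro hw
    have hT := (summable_smul_of_column hsum hcol
      (memℓp_two_iff.1 (star w).property)).hasSum
    set T := ∑' i, star w i • a i
    suffices ∀ x y : E, ⟪y, T x⟫_𝕜 = 0 by
      convert hT
      ext x
      simpa using (inner_self_eq_zero.mp (this x (T x))).symm
    intro x y
    let v : lp (fun _ : ι => 𝕜) 2 := ⟨_, memℓp_inner_apply hsum x y⟩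
    have hv (i : ι) : v i = normalFunctional (Pi.single 0 x) (Pi.single 0 y) (a i) :=
      (normalFunctional_single 0 x y (a i)).symm
    have hvJ : v ∈ normalFunctionalImage a := mem_normalFunctionalImage_iff.2
      ⟨_, _, summable_norm_sq_single 0 x, summable_norm_sq_single 0 y, hv⟩
    rw [← normalFunctional_single 0 x y T, ← inner_star_eq_normalFunctional hT hv, star_star]
    exact (Submodule.mem_orthogonal' _ w).1 hw v hvJ
  · intro h
    refine (Submodule.mem_orthogonal' _ w).2 fun v hv => ?_
    obtain ⟨ξ, η, -, -, hv⟩ := mem_normalFunctionalImage_iff.1 hv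
    rw [← star_star w, inner_star_eq_normalFunctional h hv, map_zero]

end Image

/-- For a bounded column `(a i)` of operators on a Hilbert space `H`, the family
`{a i}` fails to be strongly independent (there is a nonzero `λ ∈ ℓ²` with `∑ i λ i • a i = 0`
in operator norm) if and only if the set
`J = {(ω(a₁), ω(a₂), …) : ω normal (weak*-continuous) functional on B(H)}` is not dense in `ℓ²`,
where normal functionals are those of the form `T ↦ ∑ₖ ⟪η k, T (ξ k)⟫` with
`∑ ‖ξ k‖², ∑ ‖η k‖² < ∞`. -/
theorem stmt2 {H : Type*} [NormedAddCommGroup H] [InnerProductSpace ℂ H] [CompleteSpace H]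
    (a : ℕ → H →L[ℂ] H) (C : ℝ)
    (hsum : ∀ ξ : H, Summable fun i => ‖a i ξ‖ ^ 2)
    (hcol : ∀ ξ : H, ∑' i, ‖a i ξ‖ ^ 2 ≤ C ^ 2 * ‖ξ‖ ^ 2) :
    (∃ lam : lp (fun _ : ℕ => ℂ) 2, lam ≠ 0 ∧ HasSum (fun i => lam i • a i) 0) ↔
      ¬ Dense {v : lp (fun _ : ℕ => ℂ) 2 |
          ∃ ξ η : ℕ → H, (Summable fun k => ‖ξ k‖ ^ 2) ∧ (Summable fun k => ‖η k‖ ^ 2) ∧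
            ∀ i, v i = ∑' k, (inner ℂ (η k) (a i (ξ k)) : ℂ)} := by
  change _ ↔ ¬ Dense (normalFunctionalImage a : Set (lp (fun _ : ℕ => ℂ) 2))
  rw [Submodule.dense_iff_topologicalClosure_eq_top, Submodule.topologicalClosure_eq_top_iff,
    ← ne_eq, Submodule.ne_bot_iff]
  constructor
  · rintro ⟨lam, hlam, h0⟩
    refine ⟨star lam, (mem_orthogonal_normalFunctionalImage_iff hsum hcol _).2 ?_,
      star_ne_zero.2 hlam⟩
    simpa using h0
  · rintro ⟨w, hw, hw0⟩
    exact ⟨star w, star_ne_zero.2 hw0,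
      (mem_orthogonal_normalFunctionalImage_iff hsum hcol w).1 hw⟩
end

section
/- Let H be a Hilbert space, D ⊆ B(H) a C*-subalgebra acting non-degenerately, and V : X → H a closable densely defined operator with domain X such that r V ξ = V r ξ for all r ∈ D and ξ ∈ X, with r X ⊆ X. Then the closure \bar{V} of V satisfies r \bar{V} ⊆ \bar{V} r for all r in the von Neumann algebra D'' generated by D; that is, \bar{V} is affiliated with the commutant D'. -/
/-!
The graph of `V̄` is a closed subspace of `H ⊕ H` invariant under `r ⊕ r` for every `r ∈ D`.
As `D` is closed under adjoints, the orthogonal projection onto the graph commutes with every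
`r ⊕ r`, so its four matrix entries lie in `D'`. Hence it commutes with `s ⊕ s` for `s ∈ D''`,
i.e. the graph is invariant under `s ⊕ s`, which says `s V̄ ⊆ V̄ s`.
-/

open Set

namespace LinearPMap

variable {R E F : Type*} [CommRing R] [AddCommGroup E] [AddCommGroup F] [Module R E] [Module R F]

/-- `b f ⊆ f a` in the notation of unbounded operators. -/
def Intertwines (f : E →ₗ.[R] F) (a : E → E) (b : F → F) : Prop :=
  ∀ x : f.domain, ∃ hx : a x ∈ f.domain, f ⟨a x, hx⟩ = b (f x)

theorem intertwines_iff_mapsTo_graph {f : E →ₗ.[R] F} {a : E → E} {b : F → F} :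
    f.Intertwines a b ↔ MapsTo (Prod.map a b) f.graph f.graph := by
  constructor
  · rintro h ⟨_, _⟩ hp
    obtain ⟨x, rfl, rfl⟩ := f.mem_graph_iff.1 hp
    obtain ⟨hx, hfx⟩ := h x
    exact f.mem_graph_iff.2 ⟨⟨a x, hx⟩, rfl, hfx⟩
  · intro h x
    obtain ⟨y, hy : (y : E) = a x, hfy⟩ := f.mem_graph_iff.1 (h (f.mem_graph x))
    have hax : a x ∈ f.domain := hy ▸ y.2
    obtain rfl : y = ⟨a x, hax⟩ := Subtype.ext hy
    exact ⟨hax, hfy⟩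

theorem IsClosable.intertwines_closure [TopologicalSpace E] [TopologicalSpace F]
    [ContinuousAdd E] [ContinuousAdd F] [TopologicalSpace R]
    [ContinuousSMul R E] [ContinuousSMul R F]
    {f : E →ₗ.[R] F} (hf : f.IsClosable) {a : E → E} {b : F → F}
    (ha : Continuous a) (hb : Continuous b) (h : f.Intertwines a b) :
    f.closure.Intertwines a b := by
  rw [intertwines_iff_mapsTo_graph, ← hf.graph_closure_eq_closure_graph,
    Submodule.topologicalClosure_coe] at *
  exact h.closure (ha.prodMap hb)

end LinearPMap

namespace Submodule

variable {𝕜 E : Type*} [RCLike 𝕜] [NormedAddCommGroup E] [InnerProductSpace 𝕜 E] [CompleteSpace E]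

theorem starProjection_mem_centralizer (K : Submodule 𝕜 E) [K.HasOrthogonalProjection]
    {S : Set (E →L[𝕜] E)} (hS : ∀ a ∈ S, star a ∈ S) (hK : ∀ a ∈ S, MapsTo a K K) :
    K.starProjection ∈ centralizer S := by
  intro a ha
  ext v
  change a (K.starProjection v) = K.starProjection (a v)
  have hperp : a (v - K.starProjection v) ∈ Kᗮ := fun u hu => by
    rw [← ContinuousLinearMap.adjoint_inner_left, ← ContinuousLinearMap.star_eq_adjoint]
    exact K.sub_starProjection_mem_orthogonal v _ (hK _ (hS a ha) hu)
  exact (eq_starProjection_of_mem_orthogonal' (hK a ha (K.starProjection_apply_mem v)) hperp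
    (by rw [← map_add, add_sub_cancel])).symm

theorem mapsTo_of_mem_centralizer_centralizer (K : Submodule 𝕜 E) [K.HasOrthogonalProjection]
    {S : Set (E →L[𝕜] E)} (hS : ∀ a ∈ S, star a ∈ S) (hK : ∀ a ∈ S, MapsTo a K K)
    {t : E →L[𝕜] E} (ht : t ∈ centralizer (centralizer S)) : MapsTo t K K := by
  intro x hx
  have hPt := congr($(ht _ (K.starProjection_mem_centralizer hS hK)) x)
  change K.starProjection (t x) = t (K.starProjection x) at hPt
  rw [← K.starProjection_eq_self_iff.2 hx, ← hPt]
  exact K.starProjection_apply_mem _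

end Submodule

section Ampliation

variable {𝕜 E : Type*} [RCLike 𝕜] [NormedAddCommGroup E] [InnerProductSpace 𝕜 E]

noncomputable def ampliation (r : E →L[𝕜] E) : WithLp 2 (E × E) →L[𝕜] WithLp 2 (E × E) :=
  (WithLp.prodContinuousLinearEquiv 2 𝕜 E E).symm.toContinuousLinearMap ∘L r.prodMap r ∘L
    (WithLp.prodContinuousLinearEquiv 2 𝕜 E E).toContinuousLinearMap

@[simp]
theorem ampliation_toLp (r : E →L[𝕜] E) (p : E × E) :
    ampliation r (WithLp.toLp 2 p) = WithLp.toLp 2 (Prod.map r r p) := rfl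

@[simp]
theorem ampliation_fst (r : E →L[𝕜] E) (v : WithLp 2 (E × E)) :
    (ampliation r v).fst = r v.fst := rfl

@[simp]
theorem ampliation_snd (r : E →L[𝕜] E) (v : WithLp 2 (E × E)) :
    (ampliation r v).snd = r v.snd := rfl

theorem star_ampliation [CompleteSpace E] (r : E →L[𝕜] E) :
    star (ampliation r) = ampliation (star r) := by
  rw [ContinuousLinearMap.star_eq_adjoint, eq_comm, ContinuousLinearMap.eq_adjoint_iff]
  intro v w
  simp [WithLp.prod_inner_apply, ContinuousLinearMap.star_eq_adjoint,
    ContinuousLinearMap.adjoint_inner_left]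

theorem comp_ampliation_comp_mem_centralizer {S : Set (E →L[𝕜] E)}
    {T : WithLp 2 (E × E) →L[𝕜] WithLp 2 (E × E)} (hT : T ∈ centralizer (ampliation '' S))
    {π : WithLp 2 (E × E) →L[𝕜] E} {ι : E →L[𝕜] WithLp 2 (E × E)}
    (hπ : ∀ (r : E →L[𝕜] E) v, π (ampliation r v) = r (π v))
    (hι : ∀ (r : E →L[𝕜] E) x, ampliation r (ι x) = ι (r x)) :
    π ∘L T ∘L ι ∈ centralizer S := by
  intro r hr
  ext x
  change r (π (T (ι x))) = π (T (ι (r x)))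
  rw [← hπ, ← hι]
  exact congr(π ($(hT _ ⟨r, hr, rfl⟩) (ι x)))

theorem ampliation_mem_centralizer_centralizer {S : Set (E →L[𝕜] E)} {s : E →L[𝕜] E}
    (hs : s ∈ centralizer (centralizer S)) :
    ampliation s ∈ centralizer (centralizer (ampliation '' S)) := by
  intro T hT
  have entry (π : WithLp 2 (E × E) →L[𝕜] E) (ι : E →L[𝕜] WithLp 2 (E × E))
      (hπ : ∀ (r : E →L[𝕜] E) v, π (ampliation r v) = r (π v))
      (hι : ∀ (r : E →L[𝕜] E) x, ampliation r (ι x) = ι (r x))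
      (x : E) : π (T (ι (s x))) = s (π (T (ι x))) := by
    simpa using congr($(hs _ (comp_ampliation_comp_mem_centralizer hT hπ hι)) x)
  let e := (WithLp.prodContinuousLinearEquiv 2 𝕜 E E).symm.toContinuousLinearMap
  have h₁₁ := entry (WithLp.fstL 2 𝕜 E E) (e ∘L .inl 𝕜 E E) (fun _ _ ↦ rfl) (by simp [e])
  have h₁₂ := entry (WithLp.fstL 2 𝕜 E E) (e ∘L .inr 𝕜 E E) (fun _ _ ↦ rfl) (by simp [e])
  have h₂₁ := entry (WithLp.sndL 2 𝕜 E E) (e ∘L .inl 𝕜 E E) (fun _ _ ↦ rfl) (by simp [e])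
  have h₂₂ := entry (WithLp.sndL 2 𝕜 E E) (e ∘L .inr 𝕜 E E) (fun _ _ ↦ rfl) (by simp [e])
  simp only [e, ContinuousLinearMap.coe_comp, Function.comp_apply, ContinuousLinearMap.inl_apply,
    ContinuousLinearMap.inr_apply, ContinuousLinearEquiv.coe_coe,
    WithLp.prodContinuousLinearEquiv_symm_apply, WithLp.fstL_apply, WithLp.sndL_apply]
    at h₁₁ h₁₂ h₂₁ h₂₂
  have split (a b : E) : WithLp.toLp 2 (a, b) = WithLp.toLp 2 (a, 0) + WithLp.toLp 2 (0, b) := by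
    simp [← WithLp.toLp_add]
  ext1 ⟨x, y⟩
  change T (ampliation s _) = ampliation s (T _)
  refine WithLp.ofLp_injective 2 (Prod.ext ?_ ?_)
  · change (T _).fst = (ampliation s (T _)).fst
    rw [ampliation_fst, ampliation_toLp, Prod.map_apply, split (s x), split x, map_add, map_add,
      WithLp.add_fst, WithLp.add_fst, h₁₁, h₁₂, map_add]
  · change (T _).snd = (ampliation s (T _)).snd
    rw [ampliation_snd, ampliation_toLp, Prod.map_apply, split (s x), split x, map_add, map_add,
      WithLp.add_snd, WithLp.add_snd, h₂₁, h₂₂, map_add]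

end Ampliation

theorem Submodule.mapsTo_prodMap_of_mem_centralizer_centralizer {𝕜 E : Type*} [RCLike 𝕜]
    [NormedAddCommGroup E] [InnerProductSpace 𝕜 E] [CompleteSpace E]
    {G : Submodule 𝕜 (E × E)} (hG : IsClosed (G : Set (E × E)))
    {S : Set (E →L[𝕜] E)} (hS : ∀ a ∈ S, star a ∈ S) (hGS : ∀ a ∈ S, MapsTo (Prod.map a a) G G)
    {t : E →L[𝕜] E} (ht : t ∈ centralizer (centralizer S)) : MapsTo (Prod.map t t) G G := by
  let e := WithLp.prodContinuousLinearEquiv 2 𝕜 E E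
  let K := G.comap (e : WithLp 2 (E × E) →ₗ[𝕜] E × E)
  have : CompleteSpace K := (hG.preimage e.continuous).completeSpace_coe
  have hK := K.mapsTo_of_mem_centralizer_centralizer (S := ampliation '' S)
    (by rintro _ ⟨a, ha, rfl⟩; exact ⟨star a, hS a ha, (star_ampliation a).symm⟩)
    (by rintro _ ⟨a, ha, rfl⟩ v hv; exact hGS a ha hv)
    (ampliation_mem_centralizer_centralizer ht)
  exact fun p hp => hK (show WithLp.toLp 2 p ∈ K from hp)

theorem stmt16_general {H : Type*} [NormedAddCommGroup H] [InnerProductSpace ℂ H] [CompleteSpace H]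
    (D : StarSubalgebra ℂ (H →L[ℂ] H))
    (V : H →ₗ.[ℂ] H) (hclosable : V.IsClosable)
    (hdom : ∀ r ∈ D, ∀ x : V.domain, (r : H →L[ℂ] H) (x : H) ∈ V.domain)
    (hcomm : ∀ (r : H →L[ℂ] H) (hr : r ∈ D) (x : V.domain),
        V ⟨r (x : H), hdom r hr x⟩ = r (V x)) :
    ∀ r ∈ Set.centralizer (Set.centralizer (D : Set (H →L[ℂ] H))),
      ∀ x : V.closure.domain, ∃ hx : r (x : H) ∈ V.closure.domain,
        V.closure ⟨r (x : H), hx⟩ = r (V.closure x) := by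
  intro s hs
  have hD : ∀ r ∈ (D : Set (H →L[ℂ] H)), MapsTo (Prod.map r r) V.closure.graph V.closure.graph :=
    fun r hr => LinearPMap.intertwines_iff_mapsTo_graph.1 <|
      hclosable.intertwines_closure r.continuous r.continuous fun x => ⟨hdom r hr x, hcomm r hr x⟩
  exact LinearPMap.intertwines_iff_mapsTo_graph.2 <|
    Submodule.mapsTo_prodMap_of_mem_centralizer_centralizer hclosable.closure_isClosed
      (fun r hr => star_mem hr) hD hs

/-- Let `D ⊆ B(H)` be a norm-closed *-subalgebra acting non-degenerately, and
`V` a closable densely defined operator whose domain `X` is `D`-invariant with `r V ξ = V r ξ`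
for `r ∈ D`, `ξ ∈ X`. Then the closure of `V` intertwines every element of the von Neumann
algebra `D''` (double commutant) generated by `D`: for all `r ∈ D''`, `r V̄ ⊆ V̄ r`; i.e. `V̄`
is affiliated with the commutant `D'`. -/
theorem stmt16 {H : Type*} [NormedAddCommGroup H] [InnerProductSpace ℂ H] [CompleteSpace H]
    (D : StarSubalgebra ℂ (H →L[ℂ] H)) (hclosed : IsClosed (D : Set (H →L[ℂ] H)))
    (hnondeg : Dense ((Submodule.span ℂ
        {y : H | ∃ r ∈ D, ∃ ξ : H, y = r ξ} : Submodule ℂ H) : Set H))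
    (V : H →ₗ.[ℂ] H) (hdense : Dense (V.domain : Set H)) (hclosable : V.IsClosable)
    (hdom : ∀ r ∈ D, ∀ x : V.domain, (r : H →L[ℂ] H) (x : H) ∈ V.domain)
    (hcomm : ∀ (r : H →L[ℂ] H) (hr : r ∈ D) (x : V.domain),
        V ⟨r (x : H), hdom r hr x⟩ = r (V x)) :
    ∀ r ∈ Set.centralizer (Set.centralizer (D : Set (H →L[ℂ] H))),
      ∀ x : V.closure.domain, ∃ hx : r (x : H) ∈ V.closure.domain,
        V.closure ⟨r (x : H), hx⟩ = r (V.closure x) :=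
  stmt16_general D V hclosable hdom hcomm
end
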